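/- For any word w, letters u, v_1,...,v_n in S_N (n ≥ 1), writing Q(w,x; v_{i+1},...,v_n) := ζ*(w,x)·ζ(v_{i+1},...,v_n) and Q'(w,x; v_{i+1},...,v_n) for the double-sum remainder term in the quasi-shuffle expansion, the telescoping identity holds: -ζ(w, v_1+u, v_2,...,v_n) + Σ_{i=1}^{n} (-1)^{i-1} Q(w, u+v_1+...+v_i ; v_{i+1},...,v_n) + Σ_{i=1}^{n-1} (-1)^i Q'(w, u+v_1+...+v_i ; v_{i+1},...,v_n) = 0, where the key input is that Q(w,x;v_{i+1},...,v_n) - Q'(w,x;v_{i+1},...,v_n) = ζ(w,x,v_{i+1},...,v_n) + ζ(w,x+v_{i+1},v_{i+2},...,v_n). -/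
import Mathlib


/- The harmonic (quasi-shuffle) algebra: H = ℚ⟨words over a commutative semigroup M⟩.
We represent the word (u₁,…,u_k) of the paper by a list; `hp` is the quasi-shuffle
recursion on the *last* letters, implemented on reversed lists, and `hpw` is the
paper's harmonic product of two words, `hmul` its ℚ-bilinear extension. -/

/-- Quasi-shuffle recursion, acting on reversed words (head = last letter). -/
noncomputable def hp {M : Type*} [AddCommSemigroup M] : List M → List M → (List M →₀ ℚ)
  | [], w => Finsupp.single w 1
  | u :: w1, [] => Finsupp.single (u :: w1) 1
  | u :: w1, v :: w2 =>
      Finsupp.mapDomain (u :: ·) (hp w1 (v :: w2)) +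
      Finsupp.mapDomain (v :: ·) (hp (u :: w1) w2) +
      Finsupp.mapDomain ((u + v) :: ·) (hp w1 w2)
  termination_by w1 w2 => w1.length + w2.length

/-- The harmonic product of two words (in natural order). -/
noncomputable def hpw {M : Type*} [AddCommSemigroup M] (w1 w2 : List M) : List M →₀ ℚ :=
  Finsupp.mapDomain List.reverse (hp w1.reverse w2.reverse)

/-- The harmonic product on H = ℚ⟨words⟩, the ℚ-bilinear extension of `hpw`. -/
noncomputable def hmul {M : Type*} [AddCommSemigroup M] (x y : List M →₀ ℚ) : List M →₀ ℚ :=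
  x.sum fun w1 c1 => y.sum fun w2 c2 => (c1 * c2) • hpw w1 w2

/-- Q(w,x;vs) = (w,x) * vs in the harmonic algebra (the product of the two
multiple zeta elements, before applying ζ*). -/
noncomputable def Qh {M : Type*} [AddCommSemigroup M] (w : List M) (x : M) (vs : List M) :
    List M →₀ ℚ :=
  hmul (Finsupp.single (w ++ [x]) 1) (Finsupp.single vs 1)

/-- Q'(w,x;vs): the remainder in the quasi-shuffle expansion, characterized by
Q - Q' = (w,x,v_{i+1},…,v_n) + (w,x+v_{i+1},v_{i+2},…,v_n) (and Q' = 0 on the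
empty word). -/
noncomputable def Q'h {M : Type*} [AddCommSemigroup M] (w : List M) (x : M) :
    List M → (List M →₀ ℚ)
  | [] => 0
  | v :: t => Qh w x (v :: t) - Finsupp.single (w ++ x :: v :: t) 1 -
      Finsupp.single (w ++ (x + v) :: t) 1

lemma hp_nil {M : Type*} [AddCommSemigroup M] (l : List M) : hp l [] = Finsupp.single l 1 := by
  cases l <;> rw [hp]

lemma Qh_nil {M : Type*} [AddCommSemigroup M] (w : List M) (x : M) :
    Qh w x [] = Finsupp.single (w ++ [x]) 1 := by
  rw [Qh, hmul, Finsupp.sum_single_index (by simp), Finsupp.sum_single_index (by simp)]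
  simp [hpw, hp_nil, Finsupp.mapDomain_single]
lemma sum_Icc_one {F : Type*} [AddCommMonoid F] (m : ℕ) (f : ℕ → F) :
    ∑ i ∈ Finset.Icc 1 m, f i = ∑ j ∈ Finset.range m, f (j + 1) := by
  rw [← Finset.Ico_add_one_right_eq_Icc, Finset.sum_Ico_eq_sum_range]
  simp [add_comm]

/-- the telescoping identity
-ζ(w, v₁+u, v₂,…,v_n) + Σ_{i=1}^{n} (-1)^{i-1} Q(w, u+v₁+⋯+v_i ; v_{i+1},…,v_n)
 + Σ_{i=1}^{n-1} (-1)^i Q'(w, u+v₁+⋯+v_i ; v_{i+1},…,v_n) = 0,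
formalized in the harmonic algebra H before applying ζ. -/
theorem telescoping_identity {M : Type*} [AddCommSemigroup M]
    (n : ℕ) (hn : 1 ≤ n) (u : M) (v : Fin n → M) (w : List M) :
    -(Finsupp.single (w ++ (v ⟨0, hn⟩ + u) :: (List.ofFn v).drop 1) (1 : ℚ)) +
      ∑ i ∈ Finset.Icc 1 n, ((-1 : ℚ) ^ (i - 1)) •
        Qh w (((List.ofFn v).take i).foldl (· + ·) u) ((List.ofFn v).drop i) +
      ∑ i ∈ Finset.Icc 1 (n - 1), ((-1 : ℚ) ^ i) •
        Q'h w (((List.ofFn v).take i).foldl (· + ·) u) ((List.ofFn v).drop i) = 0 := by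
  obtain ⟨m, rfl⟩ : ∃ m, n = m + 1 := ⟨n - 1, (Nat.succ_pred_eq_of_pos hn).symm⟩
  set L := List.ofFn v with hLdef
  have hL : L.length = m + 1 := by simp [hLdef]
  set x : ℕ → M := fun i => (L.take i).foldl (· + ·) u with hxdef
  set s : ℕ → (List M →₀ ℚ) := fun i => Finsupp.single (w ++ x i :: L.drop i) 1 with hsdef
  have hdrop : ∀ i (h : i < m + 1), L.drop i = v ⟨i, h⟩ :: L.drop (i + 1) := by
    intro i h
    rw [hLdef, List.drop_eq_getElem_cons (by simpa using h), List.getElem_ofFn]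
  have htake : ∀ i (h : i < m + 1), L.take (i + 1) = L.take i ++ [v ⟨i, h⟩] := by
    intro i h
    rw [hLdef, List.take_succ, List.getElem?_eq_getElem (by simpa using h), List.getElem_ofFn]
    rfl
  have hxs : ∀ i (h : i < m + 1), x (i + 1) = x i + v ⟨i, h⟩ := by
    intro i h
    simp [hxdef, htake i h]
  have hQ' : ∀ i (h : i < m + 1),
      Q'h w (x i) (L.drop i) = Qh w (x i) (L.drop i) - s i - s (i + 1) := by
    intro i h
    rw [hdrop i h, Q'h, ← hdrop i h, hsdef]
    simp only [hdrop i h, hxs i h]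
  have hQtop : Qh w (x (m + 1)) (L.drop (m + 1)) = s (m + 1) := by
    have hnil : L.drop (m + 1) = [] := List.drop_eq_nil_of_le (by rw [hL])
    rw [hnil, Qh_nil, hsdef]
    simp [hnil]
  have hx1 : v ⟨0, hn⟩ + u = x 1 := by
    have h1 : L.take 1 = [v ⟨0, hn⟩] := by
      have := htake 0 (by omega)
      simpa using this
    simp [hxdef, h1, add_comm]
  have hxapp : ∀ i, List.foldl (· + ·) u (L.take i) = x i := fun _ => rfl
  have hsapp : ∀ i, Finsupp.single (w ++ x i :: L.drop i) (1:ℚ) = s i := fun _ => rfl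
  rw [hx1]
  rw [Finset.sum_Icc_succ_top hn, Nat.add_sub_cancel, sum_Icc_one, sum_Icc_one]
  simp only [hxapp, hsapp]
  rw [hQtop]
  have key : ∀ j ∈ Finset.range m,
      ((-1 : ℚ) ^ (j + 1 - 1)) • Qh w (x (j + 1)) (L.drop (j + 1)) +
        ((-1 : ℚ) ^ (j + 1)) • Q'h w (x (j + 1)) (L.drop (j + 1)) =
      ((-1 : ℚ) ^ j • s (j + 1) - (-1 : ℚ) ^ (j + 1) • s (j + 2)) := by
    intro j hj
    rw [Finset.mem_range] at hj
    rw [hQ' (j + 1) (by omega), Nat.add_sub_cancel]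
    simp only [smul_sub, pow_succ, neg_smul, mul_neg, mul_one, neg_neg]
    abel
  calc
    -s 1 + (∑ j ∈ Finset.range m, ((-1:ℚ) ^ (j + 1 - 1)) • Qh w (x (j+1)) (L.drop (j+1))
        + (-1:ℚ) ^ m • s (m+1))
      + ∑ j ∈ Finset.range m, ((-1:ℚ) ^ (j+1)) • Q'h w (x (j+1)) (L.drop (j+1))
        = -s 1 + (-1:ℚ) ^ m • s (m+1) +
          ∑ j ∈ Finset.range m, (((-1:ℚ) ^ (j + 1 - 1)) • Qh w (x (j+1)) (L.drop (j+1)) +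
            ((-1:ℚ) ^ (j+1)) • Q'h w (x (j+1)) (L.drop (j+1))) := by
          rw [Finset.sum_add_distrib]; abel
    _ = -s 1 + (-1:ℚ) ^ m • s (m+1) +
          ∑ j ∈ Finset.range m, ((-1:ℚ) ^ j • s (j+1) - (-1:ℚ) ^ (j+1) • s (j+2)) :=
          by rw [Finset.sum_congr rfl key]
    _ = 0 := by
          rw [Finset.sum_range_sub' (fun j => (-1:ℚ) ^ j • s (j+1)) m]
          simp only [pow_zero, one_smul]
          abel
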